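/- Let k have characteristic ≠ 2 and let V be a 2-dimensional k-vector space with a skew-symmetric bilinear form ⟨ , ⟩ with ⟨v_1,v_2⟩ = 1. Identify sl_2 with Sym^2(V) via [uv, w] = (1/2)(⟨u,w⟩v + ⟨v,w⟩u). On W = V⊗V⊗V define the symmetric bilinear map [ , ] : W × W → sl_2^{⊕3} by [u⊗v⊗w, u'⊗v'⊗w'] = α_1⟨v,v'⟩⟨w,w'⟩uu' ⊕ α_2⟨u,u'⟩⟨w,w'⟩vv' ⊕ α_3⟨u,u'⟩⟨v,v'⟩ww'. Then the Jacobi-type identity [[x,y],z] + [[y,z],x] + [[x,z],y] = 0 holds for all x, y, z ∈ W if and only if α_1 + α_2 + α_3 = 0. -/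

import Mathlib

/-!
The Jacobiator is linear in `α`, and the Jacobiators for `α = (0,1,0)` and `α = (0,0,1)` agree
with the one for `α = (1,0,0)` (a coordinatewise computation). Hence the Jacobiator for `α` is
`(α₁ + α₂ + α₃)` times the one for `(1,0,0)`, and the latter does not vanish: at
`x = z = e₀⊗e₀⊗e₀`, `y = e₁⊗e₁⊗e₁` its `(0,0,0)` coordinate is `-1` once `2` is invertible.
-/

/- `Sym²(V)` is modelled by symmetric `2 × 2` matrices, `uv ↦ (1/2)(uvᵀ + vuᵀ)`, so that the
action is `[S, w] = S J w` with `J` the matrix of the skew form; `V⊗V⊗V` is modelled by coefficient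
arrays, `u⊗v⊗w` being `(i,j,l) ↦ uᵢ vⱼ w_l`. -/
namespace Stmt12

variable (k : Type*) [Field k]

def J : Matrix (Fin 2) (Fin 2) k := !![0, 1; -1, 0]

abbrev W (k : Type*) := Fin 2 → Fin 2 → Fin 2 → k

def comp1 (x y : W k) : Matrix (Fin 2) (Fin 2) k :=
  Matrix.of fun a b => (1 / 2) *
    ∑ j, ∑ j', ∑ l, ∑ l',
      J k j j' * J k l l' * (x a j l * y b j' l' + x b j l * y a j' l')

def comp2 (x y : W k) : Matrix (Fin 2) (Fin 2) k :=
  Matrix.of fun a b => (1 / 2) *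
    ∑ i, ∑ i', ∑ l, ∑ l',
      J k i i' * J k l l' * (x i a l * y i' b l' + x i b l * y i' a l')

def comp3 (x y : W k) : Matrix (Fin 2) (Fin 2) k :=
  Matrix.of fun a b => (1 / 2) *
    ∑ i, ∑ i', ∑ j, ∑ j',
      J k i i' * J k j j' * (x i j a * y i' j' b + x i j b * y i' j' a)

def br (α₁ α₂ α₃ : k) (x y : W k) :
    Matrix (Fin 2) (Fin 2) k × Matrix (Fin 2) (Fin 2) k × Matrix (Fin 2) (Fin 2) k :=
  (α₁ • comp1 k x y, α₂ • comp2 k x y, α₃ • comp3 k x y)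

def actg (S : Matrix (Fin 2) (Fin 2) k × Matrix (Fin 2) (Fin 2) k ×
    Matrix (Fin 2) (Fin 2) k) (x : W k) : W k :=
  fun i j l =>
    (∑ a, (S.1 * J k) i a * x a j l) + (∑ a, (S.2.1 * J k) j a * x i a l) +
      (∑ a, (S.2.2 * J k) l a * x i j a)

def dec (u v w : Fin 2 → k) : W k := fun i j l => u i * v j * w l

abbrev SL2Triple := Matrix (Fin 2) (Fin 2) k × Matrix (Fin 2) (Fin 2) k × Matrix (Fin 2) (Fin 2) k

def jacobiator (α₁ α₂ α₃ : k) (x y z : W k) : W k :=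
  actg k (br k α₁ α₂ α₃ x y) z + actg k (br k α₁ α₂ α₃ y z) x + actg k (br k α₁ α₂ α₃ x z) y

@[simp] lemma J_zero_zero : J k 0 0 = 0 := rfl
@[simp] lemma J_zero_one : J k 0 1 = 1 := rfl
@[simp] lemma J_one_zero : J k 1 0 = -1 := rfl
@[simp] lemma J_one_one : J k 1 1 = 0 := rfl

lemma actg_add (S T : SL2Triple k) (x : W k) : actg k (S + T) x = actg k S x + actg k T x := by
  funext i j l
  simp only [actg, Prod.fst_add, Prod.snd_add, add_mul, Matrix.add_apply, Finset.sum_add_distrib,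
    Pi.add_apply]
  ring

lemma actg_smul (c : k) (S : SL2Triple k) (x : W k) : actg k (c • S) x = c • actg k S x := by
  funext i j l
  simp only [actg, Prod.smul_fst, Prod.smul_snd, Matrix.smul_mul, Matrix.smul_apply, smul_eq_mul,
    Pi.smul_apply, mul_assoc, ← Finset.mul_sum, mul_add]

lemma br_eq_sum_smul (α₁ α₂ α₃ : k) (x y : W k) :
    br k α₁ α₂ α₃ x y = α₁ • br k 1 0 0 x y + α₂ • br k 0 1 0 x y + α₃ • br k 0 0 1 x y := by
  simp [br]

lemma jacobiator_eq_sum_smul (α₁ α₂ α₃ : k) (x y z : W k) :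
    jacobiator k α₁ α₂ α₃ x y z = α₁ • jacobiator k 1 0 0 x y z + α₂ • jacobiator k 0 1 0 x y z
      + α₃ • jacobiator k 0 0 1 x y z := by
  simp only [jacobiator, br_eq_sum_smul k α₁, actg_add, actg_smul]
  module

lemma jacobiator_zero_one_zero (x y z : W k) :
    jacobiator k 0 1 0 x y z = jacobiator k 1 0 0 x y z := by
  funext i j l
  simp only [jacobiator, actg, br, comp1, comp2, comp3, zero_smul, one_smul,
    Matrix.zero_apply, Matrix.of_apply, Matrix.mul_apply, Fin.sum_univ_two,
    zero_mul, add_zero, zero_add, Pi.add_apply]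
  fin_cases i <;> fin_cases j <;> fin_cases l <;>
  · simp only [Fin.zero_eta, Fin.mk_one, J_zero_zero, J_zero_one, J_one_zero, J_one_one, zero_mul,
      mul_zero, one_mul, mul_one, neg_mul, mul_neg, add_zero, zero_add, neg_zero]
    ring

lemma jacobiator_zero_zero_one (x y z : W k) :
    jacobiator k 0 0 1 x y z = jacobiator k 1 0 0 x y z := by
  funext i j l
  simp only [jacobiator, actg, br, comp1, comp2, comp3, zero_smul, one_smul,
    Matrix.zero_apply, Matrix.of_apply, Matrix.mul_apply, Fin.sum_univ_two,
    zero_mul, add_zero, zero_add, Pi.add_apply]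
  fin_cases i <;> fin_cases j <;> fin_cases l <;>
  · simp only [Fin.zero_eta, Fin.mk_one, J_zero_zero, J_zero_one, J_one_zero, J_one_one, zero_mul,
      mul_zero, one_mul, mul_one, neg_mul, mul_neg, add_zero, zero_add, neg_zero]
    ring

lemma jacobiator_eq_smul (α₁ α₂ α₃ : k) (x y z : W k) :
    jacobiator k α₁ α₂ α₃ x y z = (α₁ + α₂ + α₃) • jacobiator k 1 0 0 x y z := by
  rw [jacobiator_eq_sum_smul, jacobiator_zero_one_zero, jacobiator_zero_zero_one, add_smul, add_smul]

lemma jacobiator_one_zero_zero_dec (h2 : (2 : k) ≠ 0) :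
    jacobiator k 1 0 0 (dec k ![1, 0] ![1, 0] ![1, 0]) (dec k ![0, 1] ![0, 1] ![0, 1])
      (dec k ![1, 0] ![1, 0] ![1, 0]) 0 0 0 = -1 := by
  calc _ = (-2⁻¹ + -2⁻¹ : k) := by
        simp [jacobiator, actg, br, comp1, dec, Matrix.mul_apply, Fin.sum_univ_two]
    _ = -1 := by rw [← neg_add, ← two_mul, mul_inv_cancel₀ h2]

end Stmt12

open Stmt12 in
theorem stmt12 (k : Type*) [Field k] (hk : ringChar k ≠ 2) (α₁ α₂ α₃ : k) :
    (∀ x y z : W k,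
        actg k (br k α₁ α₂ α₃ x y) z + actg k (br k α₁ α₂ α₃ y z) x +
          actg k (br k α₁ α₂ α₃ x z) y = 0) ↔
      α₁ + α₂ + α₃ = 0 := by
  refine ⟨fun h => ?_, fun h x y z => ?_⟩
  · have h2 : (2 : k) ≠ 0 := Ring.two_ne_zero hk
    have h0 := congrFun₃ (h (dec k ![1, 0] ![1, 0] ![1, 0]) (dec k ![0, 1] ![0, 1] ![0, 1])
      (dec k ![1, 0] ![1, 0] ![1, 0])) 0 0 0
    rw [← jacobiator, jacobiator_eq_smul, Pi.smul_apply, Pi.smul_apply, Pi.smul_apply,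
      jacobiator_one_zero_zero_dec k h2, smul_eq_mul, mul_neg_one] at h0
    exact neg_eq_zero.mp h0
  · exact (jacobiator_eq_smul k α₁ α₂ α₃ x y z).trans (by rw [h, zero_smul])
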